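/- Let G be in class B with diam(G) ≥ 4 and T_G its associated tree. Then every central vertex of T_G is a central vertex of G, i.e., C(T_G) ⊆ C(G). -/

import Mathlib

open SimpleGraph

variable {V : Type*}

/-- `v` is a cut-vertex of the graph `G`: deleting `v` disconnects `G`. -/
def CutVtx (G : SimpleGraph V) (v : V) : Prop :=
  ¬ (G.induce {v}ᶜ).Connected

/-- A nonseparable graph: connected and with no cut-vertex. -/
def NoCutVtx {W : Type*} (H : SimpleGraph W) : Prop :=
  H.Connected ∧ ∀ w : W, (H.induce {w}ᶜ).Connected

/-- `B` is (the vertex set of) a block of `G`: a maximal nonseparable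
induced subgraph. -/
def IsBlockSet (G : SimpleGraph V) (B : Set V) : Prop :=
  NoCutVtx (G.induce B) ∧ ∀ C : Set V, B ⊆ C → NoCutVtx (G.induce C) → B = C

/-- The set of cut-vertices of `G`. -/
def cutSet (G : SimpleGraph V) : Set V := {v | CutVtx G v}

/-- The set `B` induces a complete bipartite graph in `G` with
bipartition `(V1, V2)`. -/
def CompBipOn (G : SimpleGraph V) (B V1 V2 : Set V) : Prop :=
  V1.Nonempty ∧ V2.Nonempty ∧ Disjoint V1 V2 ∧ V1 ∪ V2 = B ∧
    ∀ x ∈ B, ∀ y ∈ B, (G.Adj x y ↔ (x ∈ V1 ∧ y ∈ V2) ∨ (x ∈ V2 ∧ y ∈ V1))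

/-- A bi-block graph: a connected graph all of whose blocks are
complete bipartite. -/
def BiBlockGraph (G : SimpleGraph V) : Prop :=
  G.Connected ∧ ∀ B : Set V, IsBlockSet G B → ∃ V1 V2 : Set V, CompBipOn G B V1 V2

/-- The class 𝓑: bi-block graphs with at least two blocks and at most two
cut-vertices in each block. -/
def ClassB (G : SimpleGraph V) : Prop :=
  BiBlockGraph G ∧
  (∃ B1 B2 : Set V, IsBlockSet G B1 ∧ IsBlockSet G B2 ∧ B1 ≠ B2) ∧
  ∀ B : Set V, IsBlockSet G B → (B ∩ cutSet G).ncard ≤ 2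

/-- `S` is an admissible vertex set for the associated tree `T_G`:
it contains all cut-vertices of `G`, both vertices of every `K_{1,1}` block,
exactly one non-cut-vertex from each partite set of every leaf block,
exactly one non-cut-vertex from the cut-vertex-free partite set of every
bridge block whose two cut-vertices share a partite set, and no other
vertices. -/
def AssocSet (G : SimpleGraph V) (S : Set V) : Prop :=
  (∀ v, CutVtx G v → v ∈ S) ∧
  ∀ B V1 V2 : Set V, IsBlockSet G B → CompBipOn G B V1 V2 →
    ((V1.ncard = 1 ∧ V2.ncard = 1) → B ⊆ S) ∧
    (¬ (V1.ncard = 1 ∧ V2.ncard = 1) →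
      (((B ∩ cutSet G).ncard = 1) →
          (S ∩ (V1 \ cutSet G)).ncard = 1 ∧ (S ∩ (V2 \ cutSet G)).ncard = 1) ∧
      (((B ∩ cutSet G).ncard = 2) →
          (((V1 ∩ cutSet G).ncard = 2) →
              (S ∩ (V2 \ cutSet G)).ncard = 1 ∧ S ∩ (V1 \ cutSet G) = ∅) ∧
          (((V2 ∩ cutSet G).ncard = 2) →
              (S ∩ (V1 \ cutSet G)).ncard = 1 ∧ S ∩ (V2 \ cutSet G) = ∅) ∧
          (((V1 ∩ cutSet G).ncard = 1 ∧ (V2 ∩ cutSet G).ncard = 1) →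
              S ∩ (B \ cutSet G) = ∅)))

/-- The eccentricity of a vertex. -/
noncomputable def ecc (G : SimpleGraph V) (v : V) : ℕ := sSup (Set.range (G.dist v))

/-- The diameter of a graph. -/
noncomputable def gdiam (G : SimpleGraph V) : ℕ := sSup (Set.range (ecc G))

/-- The radius of a graph. -/
noncomputable def gradius (G : SimpleGraph V) : ℕ := sInf (Set.range (ecc G))

/-- The center of a graph: vertices of minimum eccentricity. -/
noncomputable def gcenter (G : SimpleGraph V) : Set V := {v | ecc G v = gradius G}

/-- The eccentricity matrix of `G`. -/
noncomputable def eccMatrix (G : SimpleGraph V) : Matrix V V ℝ := fun u v =>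
  if G.dist u v = min (ecc G u) (ecc G v) then (G.dist u v : ℝ) else 0

/-- The spectrum of the eccentricity matrix of `G` is symmetric with respect
to the origin: `μ` is an eigenvalue with multiplicity `l` iff `-μ` is. -/
def SpectrumSymm [Fintype V] [DecidableEq V] (G : SimpleGraph V) : Prop :=
  ∀ (hH : (eccMatrix G).IsHermitian) (μ : ℝ),
    {i | hH.eigenvalues i = μ}.ncard = {i | hH.eigenvalues i = -μ}.ncard

/-- A vertex is diametrically distinguished if it lies on some diametrical
path and is adjacent to some central vertex. -/
noncomputable def DiamDistinguished (G : SimpleGraph V) (u : V) : Prop :=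
  (∃ (a b : V) (p : G.Walk a b), p.IsPath ∧ p.length = G.dist a b ∧
      G.dist a b = gdiam G ∧ u ∈ p.support) ∧
  ∃ z ∈ gcenter G, G.Adj u z

/-!
Every vertex `x ∉ S` is a non-cut vertex of a complete bipartite block, so its neighbours form the
opposite part, and `S` meets the part of `x`: a vertex `s ∈ S` there has `N(x) ⊆ N(s)`.
Replacing each vertex of a walk by such a representative shows that `G[S]` is isometric in `G`,
and the representative of a central vertex of `G` has eccentricity at most
`max (rad G) 2 = rad G` (as `diam G ≥ 4`), so `rad G[S] ≤ rad G`.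

Conversely, for `z ∈ S` with `ecc z ≥ 3` the eccentricity is attained in `S`. Otherwise a
farthest vertex `v ∉ S` has no twin in `S`, so its block has two cut vertices. One adjacent to
`v` is at distance `ecc z - 1`, and in the block beyond it the same situation recurs with the
second cut vertex too far away; two cut vertices on the side of `v` contradict the fact that `z`
enters the block through a single cut vertex (a block contains every path between its vertices).
Hence a central vertex `z` of `G[S]` has `ecc z ≤ max (rad G[S]) 2 ≤ rad G`.
-/

namespace SimpleGraph

variable {G : SimpleGraph V}

lemma Walk.exists_eq_append_of_end_mem {C : Set V} :
    ∀ {a b : V} (w : G.Walk a b), b ∈ C →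
      ∃ c ∈ C, ∃ (w₁ : G.Walk a c) (w₂ : G.Walk c b),
        (∀ x ∈ w₁.support, x ∈ C → x = c) ∧ w = w₁.append w₂
  | a, _, .nil, hb => ⟨a, hb, .nil, .nil, by simp, rfl⟩
  | a, _, .cons hadj w, hb => by
    by_cases ha : a ∈ C
    · exact ⟨a, ha, .nil, .cons hadj w, by simp, rfl⟩
    · obtain ⟨c, hc, w₁, w₂, hw₁, rfl⟩ := w.exists_eq_append_of_end_mem hb
      refine ⟨c, hc, .cons hadj w₁, w₂, ?_, rfl⟩
      intro x hx hxC
      rcases List.mem_cons.1 (Walk.support_cons _ _ ▸ hx) with rfl | hx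
      · exact absurd hxC ha
      · exact hw₁ x hx hxC

lemma Walk.IsPath.preconnected_induce_support_diff_start {a b : V} {p : G.Walk a b}
    (hp : p.IsPath) : (G.induce ({v | v ∈ p.support} \ {a})).Preconnected := by
  cases p with
  | nil => rintro ⟨x, hx, hxa⟩; simp_all
  | cons hadj q =>
    have hq : {v | v ∈ (Walk.cons hadj q).support} \ {a} = {v | v ∈ q.support} := by
      have ha := ((Walk.cons_isPath_iff hadj q).1 hp).2
      ext v
      simp only [Walk.support_cons, Set.mem_sdiff, Set.mem_ofPred_eq, List.mem_cons,
        Set.mem_singleton_iff]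
      exact ⟨fun ⟨h, hva⟩ => h.resolve_left hva, fun h => ⟨Or.inr h, by rintro rfl; exact ha h⟩⟩
    rw [hq]
    exact q.connected_induce_support.preconnected

lemma Walk.IsPath.preconnected_induce_support_diff_end {a b : V} {p : G.Walk a b}
    (hp : p.IsPath) : (G.induce ({v | v ∈ p.support} \ {b})).Preconnected := by
  have h := hp.reverse.preconnected_induce_support_diff_start
  rwa [show {v | v ∈ p.reverse.support} = {v | v ∈ p.support} by ext; simp] at h

lemma induce_union_connected_of_preconnected {s t : Set V} (hs : (G.induce s).Connected)
    (ht : (G.induce t).Preconnected) (hst : t.Nonempty → (s ∩ t).Nonempty) :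
    (G.induce (s ∪ t)).Connected := by
  rcases t.eq_empty_or_nonempty with rfl | hne
  · rwa [Set.union_empty]
  · exact induce_union_connected hs.preconnected ht (hst hne)

lemma reachable_induce_iff {s : Set V} {a b : s} :
    (G.induce s).Reachable a b ↔ ∃ W : G.Walk a b, ∀ x ∈ W.support, x ∈ s := by
  refine ⟨fun ⟨W⟩ => ⟨(W.map (Embedding.induce s).toHom : G.Walk a b), fun x hx => ?_⟩,
    fun ⟨W, hW⟩ => (W.induce s hW).reachable⟩
  obtain ⟨y, -, rfl⟩ := List.mem_map.1 ((Walk.support_map _ _) ▸ hx)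
  exact y.2

lemma Walk.length_induce {s : Set V} {u v : V} :
    ∀ (w : G.Walk u v) (hw : ∀ x ∈ w.support, x ∈ s), (w.induce s hw).length = w.length
  | .nil, _ => rfl
  | .cons _ w, hw => by simp [Walk.length_induce w]

def induceComplSingletonIso (C : Set V) (x : C) :
    (G.induce C).induce {x}ᶜ ≃g G.induce (C \ {x.1}) where
  toFun y := ⟨y.1.1, y.1.2, fun h => y.2 (Subtype.ext h)⟩
  invFun y := ⟨⟨y.1, y.2.1⟩, fun h => y.2.2 (congrArg Subtype.val h)⟩
  left_inv _ := rfl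
  right_inv _ := rfl
  map_rel_iff' := Iff.rfl

lemma dist_le_of_neighborSet_subset (hconn : G.Connected) {x s z : V}
    (hN : G.neighborSet x ⊆ G.neighborSet s) (hz : z ≠ x) : G.dist z s ≤ G.dist z x := by
  obtain ⟨W, hW⟩ := (hconn z x).exists_walk_length_eq_dist
  have hW₀ : ¬ W.Nil := Walk.not_nil_of_ne hz
  have hadj : G.Adj W.penultimate s := (hN (W.adj_penultimate hW₀).symm).symm
  calc G.dist z s ≤ (W.dropLast.concat hadj).length := dist_le _
    _ = G.dist z x := by rw [Walk.length_concat, Walk.length_dropLast_add_one hW₀, hW]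

lemma dist_eq_of_neighborSet_eq (hconn : G.Connected) {x s z : V}
    (hN : G.neighborSet x = G.neighborSet s) (hzx : z ≠ x) (hzs : z ≠ s) :
    G.dist z s = G.dist z x :=
  (dist_le_of_neighborSet_subset hconn hN.le hzx).antisymm
    (dist_le_of_neighborSet_subset hconn hN.ge hzs)

lemma Walk.exists_walk_of_neighborSet_subset {S : Set V} {r : V → V} (hr : ∀ x, r x ∈ S)
    (hN : ∀ x, G.neighborSet x ⊆ G.neighborSet (r x)) :
    ∀ {a b : V} (w : G.Walk a b),
      ∃ w' : G.Walk (r a) (r b), w'.length = w.length ∧ ∀ x ∈ w'.support, x ∈ S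
  | a, _, .nil => ⟨.nil, rfl, by simpa using hr a⟩
  | a, _, .cons (v := u) hadj w => by
    obtain ⟨w', hlen, hw'⟩ := w.exists_walk_of_neighborSet_subset hr hN
    have hadj' : G.Adj (r a) (r u) := (hN u (hN a hadj).symm).symm
    refine ⟨.cons hadj' w', by simp [hlen], ?_⟩
    intro x hx
    rcases List.mem_cons.1 (Walk.support_cons _ _ ▸ hx) with rfl | hx
    · exact hr a
    · exact hw' x hx

lemma dist_induce_eq_of_neighborSet_subset {S : Set V} {r : V → V} (hr : ∀ x, r x ∈ S)
    (hrS : ∀ x ∈ S, r x = x) (hN : ∀ x, G.neighborSet x ⊆ G.neighborSet (r x))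
    (a b : S) : (G.induce S).dist a b = G.dist a b := by
  by_cases hab : G.Reachable a b
  · obtain ⟨W, hW⟩ := hab.exists_walk_length_eq_dist
    obtain ⟨W', hlen, hW'⟩ := W.exists_walk_of_neighborSet_subset hr hN
    have hS' : ∀ x ∈ (W'.copy (hrS a a.2) (hrS b b.2)).support, x ∈ S := by simpa using hW'
    refine le_antisymm ?_ ?_
    · calc (G.induce S).dist a b ≤ ((W'.copy _ _).induce S hS').length := dist_le _
        _ = G.dist a b := by
          rw [Walk.length_induce, Walk.length_copy, hlen, hW]
    · obtain ⟨W₀, hW₀⟩ := ((W'.copy _ _).induce S hS').reachable.exists_walk_length_eq_dist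
      calc G.dist a b ≤ (W₀.map (Embedding.induce S).toHom).length := dist_le _
        _ = (G.induce S).dist a b := by rw [Walk.length_map, hW₀]
  · rw [dist_eq_zero_of_not_reachable hab, dist_eq_zero_of_not_reachable]
    intro h
    obtain ⟨W, -⟩ := reachable_induce_iff.1 h
    exact hab W.reachable

end SimpleGraph

section

variable {G : SimpleGraph V}

section Eccentricity

lemma dist_le_ecc [Finite V] (v w : V) : G.dist v w ≤ ecc G v :=
  le_csSup (Set.finite_range _).bddAbove ⟨w, rfl⟩

lemma exists_dist_eq_ecc [Finite V] (v : V) : ∃ w, G.dist v w = ecc G v :=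
  Nat.sSup_mem (s := Set.range (G.dist v)) ⟨_, v, rfl⟩ (Set.finite_range _).bddAbove

lemma ecc_le [Finite V] {v : V} {n : ℕ} (h : ∀ w, G.dist v w ≤ n) : ecc G v ≤ n :=
  csSup_le ⟨_, v, rfl⟩ (Set.forall_mem_range.2 h)

lemma gradius_le_ecc (v : V) : gradius G ≤ ecc G v :=
  Nat.sInf_le ⟨v, rfl⟩

lemma exists_ecc_eq_gradius [Nonempty V] : ∃ v, ecc G v = gradius G :=
  Nat.sInf_mem (Set.range_nonempty _)

lemma gdiam_le_two_mul_gradius [Finite V] [Nonempty V] (hconn : G.Connected) :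
    gdiam G ≤ 2 * gradius G := by
  obtain ⟨c, hc⟩ := exists_ecc_eq_gradius (G := G)
  refine csSup_le (Set.range_nonempty _) (Set.forall_mem_range.2 fun v => ecc_le fun w => ?_)
  calc G.dist v w ≤ G.dist v c + G.dist c w := hconn.dist_triangle
    _ = G.dist c v + G.dist c w := by rw [dist_comm]
    _ ≤ 2 * gradius G := by linarith [dist_le_ecc (G := G) c v, dist_le_ecc (G := G) c w]

lemma ecc_le_max_of_neighborSet_subset [Finite V] (hconn : G.Connected) {x s y : V}
    (hxy : G.Adj x y) (hN : G.neighborSet x ⊆ G.neighborSet s) :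
    ecc G s ≤ max (ecc G x) 2 := by
  refine ecc_le fun w => ?_
  rcases eq_or_ne w x with rfl | hwx
  · exact (dist_le (.cons (hN hxy) (.cons hxy.symm .nil))).trans (le_max_right _ _)
  · calc G.dist s w = G.dist w s := dist_comm
      _ ≤ G.dist w x := dist_le_of_neighborSet_subset hconn hN hwx
      _ = G.dist x w := dist_comm
      _ ≤ max (ecc G x) 2 := (dist_le_ecc x w).trans (le_max_left _ _)

end Eccentricity

section Separation

def Separates (G : SimpleGraph V) (c a b : V) : Prop :=
  ∀ w : G.Walk a b, c ∈ w.support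

lemma CutVtx.exists_separates {c : V} (hc : CutVtx G c) {z : V} (hz : z ≠ c) :
    ∃ w ≠ c, Separates G c z w := by
  by_contra! h
  refine hc ((connected_iff_exists_forall_reachable _).2 ⟨⟨z, hz⟩, fun ⟨w, hw⟩ => ?_⟩)
  obtain ⟨W, hW⟩ : ∃ W : G.Walk z w, c ∉ W.support := by simpa [Separates] using h w hw
  exact reachable_induce_iff.2 ⟨W, fun x hx hxc => hW (hxc ▸ hx)⟩

lemma Separates.dist_add_dist_le {c a b : V} (h : Separates G c a b)
    (hab : G.Reachable a b) : G.dist a c + G.dist c b ≤ G.dist a b := by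
  classical
  obtain ⟨W, hW⟩ := hab.exists_walk_length_eq_dist
  calc G.dist a c + G.dist c b ≤ (W.takeUntil c (h W)).length + (W.dropUntil c (h W)).length :=
        add_le_add (dist_le _) (dist_le _)
    _ = G.dist a b := by rw [← Walk.length_append, W.take_spec, hW]

end Separation

section Blocks

variable {B : Set V}

lemma noCutVtx_induce_iff {C : Set V} :
    NoCutVtx (G.induce C) ↔
      (G.induce C).Connected ∧ ∀ x ∈ C, (G.induce (C \ {x})).Connected :=
  and_congr_right' ⟨fun h x hx => (induceComplSingletonIso C ⟨x, hx⟩).connected_iff.1 (h _),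
    fun h x => (induceComplSingletonIso C x).connected_iff.2 (h x.1 x.2)⟩

lemma noCutVtx_induce_pair {a b : V} (hab : G.Adj a b) : NoCutVtx (G.induce {a, b}) := by
  refine noCutVtx_induce_iff.2 ⟨induce_pair_connected_of_adj hab, fun x hx => ?_⟩
  obtain ⟨y, hy⟩ : ∃ y, ({a, b} : Set V) \ {x} = {y} := by
    have := hab.ne
    rcases hx with rfl | rfl
    · exact ⟨b, by ext; simp; grind⟩
    · exact ⟨a, by ext; simp; grind⟩
  rw [hy, induce_singleton_eq_top]
  exact connected_top

lemma exists_isBlockSet_of_adj [Finite V] {a b : V} (hab : G.Adj a b) :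
    ∃ B, IsBlockSet G B ∧ a ∈ B ∧ b ∈ B := by
  obtain ⟨B, hsub, hB, hmax⟩ := Finite.exists_le_maximal (p := fun C => NoCutVtx (G.induce C))
    (noCutVtx_induce_pair hab)
  exact ⟨B, ⟨hB, fun C hBC hC => (hmax hC hBC).antisymm' hBC⟩, hsub (by simp), hsub (by simp)⟩

lemma IsBlockSet.connected_induce_diff_singleton (hB : IsBlockSet G B) (x : V) :
    (G.induce (B \ {x})).Connected := by
  by_cases hx : x ∈ B
  · exact (noCutVtx_induce_iff.1 hB.1).2 x hx
  · rw [Set.sdiff_singleton_eq_self hx]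
    exact hB.1.1

/-- Adding the path to the block keeps it nonseparable: deleting a vertex cuts the path into two
pieces, each still attached to what remains of the block. -/
lemma IsBlockSet.support_subset_of_isPath (hB : IsBlockSet G B) {p q : V} (hp : p ∈ B)
    (hq : q ∈ B) {R : G.Walk p q} (hR : R.IsPath) : {v | v ∈ R.support} ⊆ B := by
  classical
  set P : Set V := {v | v ∈ R.support}
  suffices NoCutVtx (G.induce (B ∪ P)) by
    rw [hB.2 _ Set.subset_union_left this]
    exact Set.subset_union_right
  have hpP : p ∈ P := R.start_mem_support
  refine noCutVtx_induce_iff.2 ⟨induce_union_connected hB.1.1.preconnected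
    R.connected_induce_support.preconnected ⟨p, hp, hpP⟩, fun x _ => ?_⟩
  have hBx := hB.connected_induce_diff_singleton x
  by_cases hxR : x ∈ R.support
  swap
  · rw [Set.union_sdiff_distrib, Set.sdiff_singleton_eq_self (show x ∉ P from hxR)]
    exact induce_union_connected_of_preconnected hBx R.connected_induce_support.preconnected
      fun _ => ⟨p, ⟨hp, fun h => hxR (h ▸ hpP)⟩, hpP⟩
  set R₁ := R.takeUntil x hxR
  set R₂ := R.dropUntil x hxR
  have hP : P = {v | v ∈ R₁.support} ∪ {v | v ∈ R₂.support} := by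
    ext v
    simp only [P, Set.mem_union, Set.mem_ofPred_eq, ← Walk.mem_support_append_iff, R₁, R₂,
      R.take_spec hxR]
  rw [hP, Set.union_sdiff_distrib, Set.union_sdiff_distrib, ← Set.union_assoc]
  refine induce_union_connected_of_preconnected (induce_union_connected_of_preconnected hBx
    (hR.takeUntil hxR).preconnected_induce_support_diff_end ?_)
    (hR.dropUntil hxR).preconnected_induce_support_diff_start ?_
  · rintro ⟨y, hy, hyx⟩
    obtain rfl | hpx := eq_or_ne p x
    · have hR₁ : R₁.support = [p] := Walk.nil_iff_support_eq.1 (Walk.isPath_iff_nil.1 (hR.takeUntil hxR))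
      exact absurd (by simpa [hR₁] using hy) hyx
    · exact ⟨p, ⟨hp, hpx⟩, R₁.start_mem_support, hpx⟩
  · rintro ⟨y, hy, hyx⟩
    obtain rfl | hqx := eq_or_ne q x
    · have hR₂ : R₂.support = [q] := Walk.nil_iff_support_eq.1 (Walk.isPath_iff_nil.1 (hR.dropUntil hxR))
      exact absurd (by simpa [hR₂] using hy) hyx
    · exact ⟨q, Or.inl ⟨hq, hqx⟩, R₂.end_mem_support, hqx⟩

lemma IsBlockSet.cutVtx_of_adj (hB : IsBlockSet G B) {p q : V} (hp : p ∈ B) (hq : q ∉ B)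
    (hpq : G.Adj p q) : CutVtx G p := by
  classical
  intro hconn
  obtain ⟨⟨a, haB, hap⟩⟩ := (hB.connected_induce_diff_singleton p).nonempty
  obtain ⟨W, hW⟩ := reachable_induce_iff.1 (hconn.preconnected ⟨q, hpq.ne'⟩ ⟨a, hap⟩)
  have hpW : p ∉ W.bypass.support := fun h => hW p (W.support_bypass_subset_support h) rfl
  exact hq (hB.support_subset_of_isPath hp haB (W.bypass_isPath.cons hpW (h := hpq)) (by simp))

lemma IsBlockSet.adj_of_walks_outside (hB : IsBlockSet G B) {z c c' : V} (hc : c ∈ B)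
    (hc' : c' ∈ B) (hcc' : c ≠ c') (W : G.Walk z c) (hW : ∀ x ∈ W.support, x ∈ B → x = c)
    (W' : G.Walk z c') (hW' : ∀ x ∈ W'.support, x ∈ B → x = c') : G.Adj c c' := by
  classical
  obtain ⟨R, hR, hRsub⟩ : ∃ R : G.Walk c c', R.IsPath ∧
      R.support ⊆ (W.reverse.append W').support :=
    ⟨_, Walk.bypass_isPath _, Walk.support_bypass_subset_support _⟩
  have hRB := hB.support_subset_of_isPath hc hc' hR
  cases R with
  | nil => exact absurd rfl hcc'
  | @cons _ u _ hadj R' =>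
    have hu : u ∈ (W.reverse.append W').support := hRsub (by simp)
    have huB : u ∈ B := hRB (show u ∈ (Walk.cons hadj R').support by simp)
    rcases (Walk.mem_support_append_iff _ _).1 hu with hu | hu
    · exact absurd (hW u (by simpa using hu) huB) hadj.ne'
    · exact hW' u hu huB ▸ hadj

lemma IsBlockSet.exists_cutVtx_entry (hB : IsBlockSet G B) (hconn : G.Connected) {z t : V}
    (hz : z ∉ B) (ht : t ∈ B) :
    ∃ y ∈ B, CutVtx G y ∧ G.dist z y + G.dist y t ≤ G.dist z t ∧
      ∃ W : G.Walk z y, ∀ x ∈ W.support, x ∈ B → x = y := by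
  obtain ⟨W, hW⟩ := (hconn z t).exists_walk_length_eq_dist
  obtain ⟨y, hy, W₁, W₂, hW₁, rfl⟩ := W.exists_eq_append_of_end_mem ht
  obtain ⟨d, hd, hd₁, hd₂⟩ := W₁.reverse.exists_boundary_dart B hy hz
  have hdy : d.fst = y :=
    hW₁ _ (by simpa using W₁.reverse.dart_fst_mem_support_of_mem_darts hd) hd₁
  refine ⟨y, hy, hdy ▸ hB.cutVtx_of_adj hd₁ hd₂ d.adj, ?_, W₁, hW₁⟩
  rw [← hW, Walk.length_append]
  exact add_le_add (dist_le W₁) (dist_le W₂)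

/-- `z` enters `B` through a cut vertex, and by `adj_of_walks_outside` it cannot enter through
both of two non-adjacent ones. -/
lemma IsBlockSet.dist_add_two_le_of_inter_cutSet_eq_pair (hB : IsBlockSet G B)
    (hconn : G.Connected) {z c₁ c₂ : V} (hz : z ∉ B) (hcut : B ∩ cutSet G = {c₁, c₂})
    (hne : c₁ ≠ c₂) (hnadj : ¬ G.Adj c₁ c₂) :
    G.dist z c₁ + 2 ≤ G.dist z c₂ ∨ G.dist z c₂ + 2 ≤ G.dist z c₁ := by
  have hc₁ : c₁ ∈ B ∩ cutSet G := hcut ▸ Set.mem_insert _ _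
  have hc₂ : c₂ ∈ B ∩ cutSet G := hcut ▸ Set.mem_insert_of_mem _ rfl
  have h₁₂ : 2 ≤ G.dist c₁ c₂ := hconn.one_lt_dist_of_ne_of_not_adj hne hnadj
  have h₂₁ : 2 ≤ G.dist c₂ c₁ := dist_comm (G := G) ▸ h₁₂
  obtain ⟨y₁, hy₁, hy₁c, hd₁, W₁, hW₁⟩ := hB.exists_cutVtx_entry hconn hz hc₁.1
  obtain ⟨y₂, hy₂, hy₂c, hd₂, W₂, hW₂⟩ := hB.exists_cutVtx_entry hconn hz hc₂.1
  have hy₁' : y₁ ∈ B ∩ cutSet G := ⟨hy₁, hy₁c⟩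
  have hy₂' : y₂ ∈ B ∩ cutSet G := ⟨hy₂, hy₂c⟩
  rw [hcut] at hy₁' hy₂'
  rcases hy₁' with rfl | rfl
  · rcases hy₂' with rfl | rfl
    · omega
    · exact absurd (hB.adj_of_walks_outside hy₁ hy₂ hne W₁ hW₁ W₂ hW₂) hnadj
  · omega

end Blocks

lemma ClassB.inter_cutSet_nonempty (hG : ClassB G) {B : Set V} (hB : IsBlockSet G B) :
    (B ∩ cutSet G).Nonempty := by
  obtain ⟨q, hq⟩ : ∃ q, q ∉ B := by
    by_contra! h
    obtain ⟨B₁, B₂, h₁, h₂, hne⟩ := hG.2.1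
    have hB' : NoCutVtx (G.induce Set.univ) := Set.eq_univ_of_forall h ▸ hB.1
    exact hne ((h₁.2 _ (Set.subset_univ _) hB').trans (h₂.2 _ (Set.subset_univ _) hB').symm)
  obtain ⟨⟨b, hb⟩⟩ := hB.1.1.nonempty
  obtain ⟨W⟩ := hG.1.1.preconnected b q
  obtain ⟨d, -, hd₁, hd₂⟩ := W.exists_boundary_dart B hb hq
  exact ⟨d.fst, hd₁, hB.cutVtx_of_adj hd₁ hd₂ d.adj⟩

lemma ClassB.ncard_inter_cutSet_eq_one_or_two [Finite V] (hG : ClassB G) {B : Set V}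
    (hB : IsBlockSet G B) : (B ∩ cutSet G).ncard = 1 ∨ (B ∩ cutSet G).ncard = 2 := by
  have := (Set.ncard_pos (Set.toFinite _)).2 (hG.inter_cutSet_nonempty hB)
  have := hG.2.2 B hB
  omega

namespace CompBipOn

variable {B V₁ V₂ : Set V} {x y : V}

lemma symm (h : CompBipOn G B V₁ V₂) : CompBipOn G B V₂ V₁ := by
  obtain ⟨h₁, h₂, hdisj, hB, hadj⟩ := h
  exact ⟨h₂, h₁, hdisj.symm, Set.union_comm V₁ V₂ ▸ hB,
    fun x hx y hy => (hadj x hx y hy).trans or_comm⟩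

lemma left_subset (h : CompBipOn G B V₁ V₂) : V₁ ⊆ B := h.2.2.2.1 ▸ Set.subset_union_left

lemma mem_or_mem (h : CompBipOn G B V₁ V₂) (hx : x ∈ B) : x ∈ V₁ ∨ x ∈ V₂ :=
  (h.2.2.2.1.symm ▸ hx : x ∈ V₁ ∪ V₂)

lemma adj (h : CompBipOn G B V₁ V₂) (hx : x ∈ V₁) (hy : y ∈ V₂) : G.Adj x y :=
  (h.2.2.2.2 x (h.left_subset hx) y (h.symm.left_subset hy)).2 (Or.inl ⟨hx, hy⟩)

lemma not_adj (h : CompBipOn G B V₁ V₂) (hx : x ∈ V₁) (hy : y ∈ V₁) : ¬ G.Adj x y := by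
  rw [h.2.2.2.2 x (h.left_subset hx) y (h.left_subset hy)]
  rintro (⟨-, hy₂⟩ | ⟨hx₂, -⟩)
  · exact Set.disjoint_left.1 h.2.2.1 hy hy₂
  · exact Set.disjoint_left.1 h.2.2.1 hx hx₂

lemma dist_le_two (h : CompBipOn G B V₁ V₂) (hx : x ∈ B) (hy : y ∈ B) : G.dist x y ≤ 2 := by
  wlog hx₁ : x ∈ V₁ generalizing V₁ V₂
  · exact this h.symm ((h.mem_or_mem hx).resolve_left hx₁)
  rcases h.mem_or_mem hy with hy₁ | hy₂
  · obtain ⟨t, ht⟩ := h.2.1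
    exact dist_le (.cons (h.adj hx₁ ht) (.cons (h.adj hy₁ ht).symm .nil))
  · exact (dist_le (.cons (h.adj hx₁ hy₂) .nil)).trans (by simp)

lemma neighborSet_eq (h : CompBipOn G B V₁ V₂) (hB : IsBlockSet G B) (hx : x ∈ V₁)
    (hxc : ¬ CutVtx G x) : G.neighborSet x = V₂ := by
  ext u
  refine ⟨fun hu => ?_, h.adj hx⟩
  have huB : u ∈ B := by
    by_contra huB
    exact hxc (hB.cutVtx_of_adj (h.left_subset hx) huB hu)
  exact (h.mem_or_mem huB).resolve_left fun hu₁ => h.not_adj hx hu₁ hu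

lemma inter_eq_of_left_inter_eq_empty (h : CompBipOn G B V₁ V₂) {C : Set V}
    (hC : V₁ ∩ C = ∅) : B ∩ C = V₂ ∩ C := by
  rw [← h.2.2.2.1, Set.union_inter_distrib_right, hC, Set.empty_union]

end CompBipOn

namespace AssocSet

variable {S B V₁ V₂ : Set V}

lemma inter_nonempty [Finite V] (hS : AssocSet G S) (hG : ClassB G) (hB : IsBlockSet G B)
    (h : CompBipOn G B V₁ V₂) : (S ∩ V₁).Nonempty := by
  by_cases hc : (V₁ ∩ cutSet G).Nonempty
  · obtain ⟨c, hc₁, hc⟩ := hc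
    exact ⟨c, hS.1 c hc, hc₁⟩
  by_cases hK : V₁.ncard = 1 ∧ V₂.ncard = 1
  · obtain ⟨a, ha⟩ := h.1
    exact ⟨a, (hS.2 B V₁ V₂ hB h).1 hK (h.left_subset ha), ha⟩
  have hS' := (hS.2 B V₁ V₂ hB h).2 hK
  have hcut := h.inter_eq_of_left_inter_eq_empty (Set.not_nonempty_iff_eq_empty.1 hc)
  have hone : (S ∩ (V₁ \ cutSet G)).ncard = 1 := by
    rcases hG.ncard_inter_cutSet_eq_one_or_two hB with h₁ | h₂
    · exact (hS'.1 h₁).1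
    · exact ((hS'.2 h₂).2.1 (hcut ▸ h₂)).1
  obtain ⟨s, hs, hs₁, -⟩ := Set.nonempty_of_ncard_ne_zero (hone ▸ one_ne_zero)
  exact ⟨s, hs, hs₁⟩

lemma exists_neighborSet_subset [Finite V] [Nontrivial V] (hS : AssocSet G S) (hG : ClassB G)
    (x : V) : ∃ s ∈ S, (x ∈ S → s = x) ∧ G.neighborSet x ⊆ G.neighborSet s := by
  by_cases hx : x ∈ S
  · exact ⟨x, hx, fun _ => rfl, subset_rfl⟩
  obtain ⟨y, hy⟩ := hG.1.1.preconnected.exists_adj_of_nontrivial x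
  obtain ⟨B, hB, hxB, -⟩ := exists_isBlockSet_of_adj hy
  obtain ⟨V₁, V₂, h⟩ := hG.1.2 B hB
  wlog hx₁ : x ∈ V₁ generalizing V₁ V₂
  · exact this V₂ V₁ h.symm ((h.mem_or_mem hxB).resolve_left hx₁)
  obtain ⟨s, hs, hs₁⟩ := hS.inter_nonempty hG hB h
  refine ⟨s, hs, fun h' => absurd h' hx, ?_⟩
  rw [h.neighborSet_eq hB hx₁ fun hc => hx (hS.1 x hc)]
  exact fun u hu => h.adj hs₁ hu

lemma dist_induce_eq [Finite V] [Nontrivial V] (hS : AssocSet G S) (hG : ClassB G) (a b : S) :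
    (G.induce S).dist a b = G.dist a b := by
  choose r hr hrS hN using hS.exists_neighborSet_subset hG
  exact dist_induce_eq_of_neighborSet_subset hr (fun x hx => hrS x hx) hN a b

/-- A twin of `v` in `S` would be as far from `z` as `v`; without one, the choice of `S` forces
two cut vertices, one of them on the side of `v`. -/
lemma two_cutVtx_of_far [Finite V] (hS : AssocSet G S) (hG : ClassB G) (hB : IsBlockSet G B)
    (h : CompBipOn G B V₁ V₂) {z v : V} (hz : z ∉ B) (hv : v ∈ V₁) (hvS : v ∉ S)
    (hfar : ∀ s ∈ S, G.dist z s < G.dist z v) :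
    (B ∩ cutSet G).ncard = 2 ∧ (V₁ ∩ cutSet G).Nonempty := by
  have hK : ¬ (V₁.ncard = 1 ∧ V₂.ncard = 1) := fun hK =>
    hvS ((hS.2 B V₁ V₂ hB h).1 hK (h.left_subset hv))
  have hS' := (hS.2 B V₁ V₂ hB h).2 hK
  have hnotwin : (S ∩ (V₁ \ cutSet G)).ncard ≠ 1 := by
    intro hone
    obtain ⟨s, hs⟩ := Set.ncard_eq_one.1 hone
    have hs' : s ∈ S ∩ (V₁ \ cutSet G) := hs ▸ rfl
    have hN : G.neighborSet v = G.neighborSet s := by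
      rw [h.neighborSet_eq hB hv fun hc => hvS (hS.1 v hc), h.neighborSet_eq hB hs'.2.1 hs'.2.2]
    have hzs := dist_eq_of_neighborSet_eq hG.1.1 hN (z := z) (fun e => hz (e ▸ h.left_subset hv))
      (fun e => hz (e ▸ h.left_subset hs'.2.1))
    exact (hfar s hs'.1).ne hzs
  rcases hG.ncard_inter_cutSet_eq_one_or_two hB with h₁ | h₂
  · exact absurd (hS'.1 h₁).1 hnotwin
  refine ⟨h₂, Set.nonempty_iff_ne_empty.2 fun hc => hnotwin ?_⟩
  exact ((hS'.2 h₂).2.1 (h.inter_eq_of_left_inter_eq_empty hc ▸ h₂)).1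

/-- Beyond `c` there is a farthest vertex `w` whose block is entered from `z` only through `c`;
the second cut vertex of that block would then lie in `S` at distance at least `ecc z`. -/
lemma dist_cutVtx_add_one_ne_ecc [Finite V] (hS : AssocSet G S) (hG : ClassB G) {z c : V}
    (hc : CutVtx G c) (hzc : z ≠ c) (hfar : ∀ s ∈ S, G.dist z s < ecc G z) :
    G.dist z c + 1 ≠ ecc G z := by
  classical
  intro hce
  have hconn := hG.1.1
  obtain ⟨w, hwc, hsep⟩ := hc.exists_separates hzc
  have hcw := hconn.pos_dist_of_ne hwc.symm
  have hzw := hsep.dist_add_dist_le (hconn z w)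
  have := dist_le_ecc (G := G) z w
  have hwe : G.dist z w = ecc G z := by omega
  have hadj : G.Adj c w := dist_eq_one_iff_adj.1 (by omega)
  obtain ⟨B, hB, hcB, hwB⟩ := exists_isBlockSet_of_adj hadj
  have hbeyond : ∀ x ∈ B, x ≠ c → Separates G c z x := by
    intro x hx hxc W
    by_contra hcW
    obtain ⟨W', hW'⟩ := reachable_induce_iff.1 <|
      (hB.connected_induce_diff_singleton c).preconnected ⟨x, hx, hxc⟩ ⟨w, hwB, hwc⟩
    rcases (Walk.mem_support_append_iff _ _).1 (hsep (W.append W')) with h | h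
    · exact hcW h
    · exact (hW' c h).2 rfl
  have hzB : z ∉ B := fun hz => hzc (by simpa [eq_comm] using hbeyond z hz hzc .nil)
  obtain ⟨V₁, V₂, h⟩ := hG.1.2 B hB
  wlog hw₁ : w ∈ V₁ generalizing V₁ V₂
  · exact this V₂ V₁ h.symm ((h.mem_or_mem hwB).resolve_left hw₁)
  obtain ⟨-, c', hc'₁, hc'⟩ := hS.two_cutVtx_of_far hG hB h hzB hw₁
    (fun hw => (hfar w hw).ne hwe) (hwe ▸ hfar)
  have hc'c : c' ≠ c := by
    rintro rfl
    exact h.not_adj hw₁ hc'₁ hadj.symm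
  have := (hbeyond c' (h.left_subset hc'₁) hc'c).dist_add_dist_le (hconn z c')
  have := hconn.pos_dist_of_ne hc'c.symm
  have := hfar c' (hS.1 c' hc')
  omega

lemma exists_mem_dist_eq_ecc [Finite V] (hS : AssocSet G S) (hG : ClassB G) {z : V}
    (he : 3 ≤ ecc G z) : ∃ s ∈ S, G.dist z s = ecc G z := by
  by_contra! hne
  have hfar : ∀ s ∈ S, G.dist z s < ecc G z := fun s hs =>
    (dist_le_ecc z s).lt_of_ne (hne s hs)
  have hconn := hG.1.1
  obtain ⟨v, hv⟩ := exists_dist_eq_ecc (G := G) z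
  have hzv : z ≠ v := by
    rintro rfl
    rw [dist_self] at hv
    omega
  have : Nontrivial V := ⟨z, v, hzv⟩
  obtain ⟨u, hu⟩ := hconn.preconnected.exists_adj_of_nontrivial v
  obtain ⟨B, hB, hvB, -⟩ := exists_isBlockSet_of_adj hu
  obtain ⟨V₁, V₂, h⟩ := hG.1.2 B hB
  wlog hv₁ : v ∈ V₁ generalizing V₁ V₂
  · exact this V₂ V₁ h.symm ((h.mem_or_mem hvB).resolve_left hv₁)
  have hzB : z ∉ B := fun hz => by
    have := h.dist_le_two hz hvB
    omega
  obtain ⟨h₂, -⟩ := hS.two_cutVtx_of_far hG hB h hzB hv₁ (fun hs => hne v hs hv) (hv ▸ hfar)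
  have hnear : ∀ c ∈ B ∩ cutSet G, G.dist z c < ecc G z ∧ ecc G z ≤ G.dist z c + G.dist c v :=
    fun c hc => ⟨hfar c (hS.1 c hc.2), hv ▸ hconn.dist_triangle⟩
  have hleft : ∀ c ∈ B ∩ cutSet G, c ∈ V₁ := by
    intro c hc
    refine (h.mem_or_mem hc.1).resolve_right fun hc₂ => ?_
    have := hnear c hc
    have := dist_eq_one_iff_adj.2 (h.adj hv₁ hc₂).symm
    exact hS.dist_cutVtx_add_one_ne_ecc hG hc.2 (z := z) (fun e => hzB (e ▸ hc.1)) hfar (by omega)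
  obtain ⟨c₁, c₂, hne, hcut⟩ := Set.ncard_eq_two.1 h₂
  have hc₁ : c₁ ∈ B ∩ cutSet G := hcut ▸ Set.mem_insert _ _
  have hc₂ : c₂ ∈ B ∩ cutSet G := hcut ▸ Set.mem_insert_of_mem _ rfl
  have := hnear c₁ hc₁
  have := hnear c₂ hc₂
  have := h.dist_le_two hc₁.1 hvB
  have := h.dist_le_two hc₂.1 hvB
  rcases hB.dist_add_two_le_of_inter_cutSet_eq_pair hconn hzB hcut hne
    (h.not_adj (hleft c₁ hc₁) (hleft c₂ hc₂)) with h | h <;> omega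

lemma ecc_induce_le [Finite V] [Nontrivial V] (hS : AssocSet G S) (hG : ClassB G) (s : S) :
    ecc (G.induce S) s ≤ ecc G s :=
  ecc_le fun t => (hS.dist_induce_eq hG s t).trans_le (dist_le_ecc _ _)

lemma gradius_induce_le [Finite V] [Nontrivial V] (hS : AssocSet G S) (hG : ClassB G) :
    gradius (G.induce S) ≤ max (gradius G) 2 := by
  obtain ⟨c, hc⟩ := exists_ecc_eq_gradius (G := G)
  obtain ⟨s, hs, -, hN⟩ := hS.exists_neighborSet_subset hG c
  obtain ⟨y, hy⟩ := hG.1.1.preconnected.exists_adj_of_nontrivial c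
  calc gradius (G.induce S) ≤ ecc (G.induce S) ⟨s, hs⟩ := gradius_le_ecc _
    _ ≤ ecc G s := hS.ecc_induce_le hG _
    _ ≤ max (gradius G) 2 := hc ▸ ecc_le_max_of_neighborSet_subset hG.1.1 hy hN

lemma ecc_le_max_ecc_induce [Finite V] [Nontrivial V] (hS : AssocSet G S) (hG : ClassB G)
    (z : S) : ecc G z ≤ max (ecc (G.induce S) z) 2 := by
  rcases le_or_gt (ecc G z) 2 with he | he
  · exact le_max_of_le_right he
  obtain ⟨s, hs, hzs⟩ := hS.exists_mem_dist_eq_ecc hG he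
  calc ecc G z = (G.induce S).dist z ⟨s, hs⟩ := by rw [hS.dist_induce_eq hG, hzs]
    _ ≤ max (ecc (G.induce S) z) 2 := le_max_of_le_left (dist_le_ecc _ _)

end AssocSet

end

theorem stmt_10 {V : Type*} [Fintype V] (G : SimpleGraph V) (hG : ClassB G)
    (h4 : 4 ≤ gdiam G) (S : Set V) (hS : AssocSet G S) :
    ∀ z : S, z ∈ gcenter (G.induce S) → z.1 ∈ gcenter G := by
  intro z hz
  have : Nonempty V := ⟨z⟩
  have hrad : 2 ≤ gradius G := by
    have := gdiam_le_two_mul_gradius hG.1.1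
    omega
  obtain ⟨w, hw⟩ := exists_dist_eq_ecc (G := G) z
  have : Nontrivial V := ⟨z, w, by
    rintro rfl
    have := gradius_le_ecc (G := G) z
    rw [dist_self] at hw
    omega⟩
  refine le_antisymm ?_ (gradius_le_ecc _)
  calc ecc G z ≤ max (ecc (G.induce S) z) 2 := hS.ecc_le_max_ecc_induce hG z
    _ = max (gradius (G.induce S)) 2 := by rw [hz]
    _ ≤ max (max (gradius G) 2) 2 := by gcongr; exact hS.gradius_induce_le hG
    _ = gradius G := by simp [hrad]
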